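/- arXiv:1304.5288 — 3 statements merged into one kernel-verified Lean document; each statement's English description precedes it below -/
import Mathlib

section
/- Let C be a nodal curve and let Z, Z' be 2-tails of C (connected subcurves with connected complement meeting their complement in exactly 2 points). Suppose there are irreducible components C_γ and C_{γ'} with C_γ ∪ C_{γ'} ⊆ Z ∧ Z' (the union of components contained in Z ∩ Z') and a fixed smooth point σ(0) contained in Z^c ∧ (Z')^c. Then Z ∧ Z' is a 2-tail of C. -/
open Finset

/-- A combinatorial model of a nodal curve: `V` is the set of irreducible
components, `N` the set of nodes, `ends e` the (one or two) components through
the node `e`, `gen v` the geometric genus of the component `v`, and `base` the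
component containing the marked smooth point `σ(0)`. -/
structure NodalGraph where
  V : Type
  N : Type
  [fV : Fintype V]
  [dV : DecidableEq V]
  [fN : Fintype N]
  [dN : DecidableEq N]
  ends : N → V × V
  gen : V → ℕ
  base : V

attribute [instance] NodalGraph.fV NodalGraph.dV NodalGraph.fN NodalGraph.dN

namespace NodalGraph

variable (G : NodalGraph)

/-- Two components are adjacent if some node lies on both. -/
def Adj (a b : G.V) : Prop := ∃ e, G.ends e = (a, b) ∨ G.ends e = (b, a)

/-- The set of terminal points of a subcurve `Z`, i.e. the nodes in `Z ∩ Zᶜ`. -/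
def Term (Z : Finset G.V) : Finset G.N :=
  univ.filter (fun e =>
    ((G.ends e).1 ∈ Z ∧ (G.ends e).2 ∉ Z) ∨ ((G.ends e).1 ∉ Z ∧ (G.ends e).2 ∈ Z))

/-- `k_Z`, the number of terminal points of `Z`. -/
def k (Z : Finset G.V) : ℕ := (G.Term Z).card

/-- A (nonempty) subcurve is connected. -/
def ConnSub (Z : Finset G.V) : Prop :=
  Z.Nonempty ∧ ∀ u ∈ Z, ∀ v ∈ Z,
    Relation.ReflTransGen (fun a b => a ∈ Z ∧ b ∈ Z ∧ G.Adj a b) u v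

/-- The whole curve is connected. -/
def Connected : Prop := G.ConnSub univ

/-- A tail: a proper subcurve `Z` with both `Z` and `Zᶜ` connected. -/
def IsTail (Z : Finset G.V) : Prop := Z ≠ univ ∧ G.ConnSub Z ∧ G.ConnSub Zᶜ

/-- A `m`-tail: a tail with `k_Z = m`. -/
def IsKTail (Z : Finset G.V) (m : ℕ) : Prop := G.IsTail Z ∧ G.k Z = m

/-- The node `e` lies on the component `v`. -/
def onComp (e : G.N) (v : G.V) : Prop := (G.ends e).1 = v ∨ (G.ends e).2 = v

/-- The node `e`, as a point of the curve, lies on the subcurve `Z`. -/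
def nodeOn (e : G.N) (Z : Finset G.V) : Prop := (G.ends e).1 ∈ Z ∨ (G.ends e).2 ∈ Z

/-- The subcurve `Z` crosses the node `e`: both branches of `e` lie in `Z`. -/
def crosses (Z : Finset G.V) (e : G.N) : Prop := (G.ends e).1 ∈ Z ∧ (G.ends e).2 ∈ Z

/-- `Z ≺ Z'`: strict inclusion with disjoint terminal points. -/
def prec (Z Z' : Finset G.V) : Prop := Z ⊂ Z' ∧ G.Term Z ∩ G.Term Z' = ∅

/-- The pair `(Z, Z')` is free: disjoint terminal points. -/
def free (Z Z' : Finset G.V) : Prop := G.Term Z ∩ G.Term Z' = ∅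

/-- The pair `(Z, Z')` is perfect. -/
def perfect (Z Z' : Finset G.V) : Prop := Z ⊆ Z' ∨ Z' ⊆ Z ∨ Zᶜ ⊆ Z' ∨ Z' ⊆ Zᶜ

/-- `T¹_γ`: the nested set of 1-tails containing `C_γ` and avoiding `σ(0)`. -/
def T1 (γ : G.V) : Set (Finset G.V) := { Z | G.IsKTail Z 1 ∧ γ ∈ Z ∧ G.base ∉ Z }

/-- The defining condition for the 2-tails entering `T²_{γ,γ'}`. -/
def cond2 (γ γ' : G.V) (Z : Finset G.V) : Prop :=
  G.IsKTail Z 2 ∧ γ ∈ Z ∧ γ' ∈ Z ∧ G.base ∉ Z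

/-- `W 0 ≺ W 1 ≺ ⋯ ≺ W (M-1)` is the nested set `T²_{γ,γ'}` of 2-tails:
each `W t` is minimal among the 2-tails `Z ⊇ C_γ ∪ C_γ'` with `σ(0) ∈ Zᶜ`
and `W (t-1) ≺ Z` (starting from `W_{-1} = ∅`), and the chain is maximal. -/
def IsNested2 (γ γ' : G.V) (M : ℕ) (W : ℕ → Finset G.V) : Prop :=
  (∀ t < M, Minimal (fun Z => G.cond2 γ γ' Z ∧ G.prec (if t = 0 then ∅ else W (t - 1)) Z) (W t)) ∧
  ¬ ∃ Z, G.cond2 γ γ' Z ∧ G.prec (if M = 0 then ∅ else W (M - 1)) Z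

/-- The set underlying a finite chain `W 0, …, W (M-1)`. -/
def chainSet (M : ℕ) (W : ℕ → Finset G.V) : Set (Finset G.V) := { Z | ∃ t < M, W t = Z }

/-- The defining condition for the 3-tails entering `T³_{γ,γ'}`:
3-tails that are moreover free with respect to every member of `T²_{γ,γ'}`. -/
def cond3 (γ γ' : G.V) (T2 : Set (Finset G.V)) (Z : Finset G.V) : Prop :=
  G.IsKTail Z 3 ∧ γ ∈ Z ∧ γ' ∈ Z ∧ G.base ∉ Z ∧ ∀ W ∈ T2, G.free Z W

/-- `W 0 ≺ ⋯ ≺ W (M-1)` is the nested set `T³_{γ,γ'}` of 3-tails (relative to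
the set `T2` of nested 2-tails). -/
def IsNested3 (γ γ' : G.V) (T2 : Set (Finset G.V)) (M : ℕ) (W : ℕ → Finset G.V) : Prop :=
  (∀ t < M, Minimal (fun Z => G.cond3 γ γ' T2 Z ∧ G.prec (if t = 0 then ∅ else W (t - 1)) Z) (W t)) ∧
  ¬ ∃ Z, G.cond3 γ γ' T2 Z ∧ G.prec (if M = 0 then ∅ else W (M - 1)) Z

end NodalGraph

/-!
Write `A = Z ∩ Z'`, `P = Zᶜ ∩ Z'`, `Q = Z ∩ Z'ᶜ`, `B = Zᶜ ∩ Z'ᶜ`. Unless one tail contains the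
other, all four regions are nonempty (`C_γ ⊆ A`, `σ(0) ∈ B`), and connectedness of `Z'`, `Z`,
`Zᶜ`, `Z'ᶜ` provides nodes `A–P`, `A–Q`, `P–B`, `Q–B`. The two terminal points of `Z` are
among the `A–P, A–B, Q–P, Q–B` nodes and those of `Z'` among the `A–Q, A–B, P–Q, P–B` nodes,
so there is exactly one `A–P` node, one `A–Q` node and no `A–B` node: `k_A = 2`. A path in `Z'`
can leave `A` only through the single `A–P` node, so `A` is connected; and `Aᶜ = Zᶜ ∪ Z'ᶜ` is
connected as a union of two connected subcurves through `σ(0)`.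
-/

namespace NodalGraph

variable {G : NodalGraph}

def cut (S T : Finset G.V) : Finset G.N :=
  univ.filter fun e =>
    ((G.ends e).1 ∈ S ∧ (G.ends e).2 ∈ T) ∨ ((G.ends e).1 ∈ T ∧ (G.ends e).2 ∈ S)

@[simp]
lemma mem_cut {S T : Finset G.V} {e : G.N} :
    e ∈ G.cut S T ↔
      ((G.ends e).1 ∈ S ∧ (G.ends e).2 ∈ T) ∨ ((G.ends e).1 ∈ T ∧ (G.ends e).2 ∈ S) := by
  simp [cut]

lemma cut_comm (S T : Finset G.V) : G.cut S T = G.cut T S := by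
  ext e; simp only [mem_cut]; tauto

lemma term_eq_cut (Z : Finset G.V) : G.Term Z = G.cut Z Zᶜ := by
  ext e; simp only [Term, mem_filter, mem_univ, true_and, mem_cut, mem_compl]

lemma card_cut_union_right {S T₁ T₂ : Finset G.V} (hT : Disjoint T₁ T₂) (hST : Disjoint S T₁) :
    #(G.cut S (T₁ ∪ T₂)) = #(G.cut S T₁) + #(G.cut S T₂) := by
  rw [← card_union_of_disjoint]
  · congr 1; ext e; simp only [mem_cut, mem_union]; tauto
  · rw [disjoint_left]
    intro e h₁ h₂
    rw [mem_cut] at h₁ h₂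
    rcases h₁ with ⟨h₁, h₁'⟩ | ⟨h₁, h₁'⟩ <;> rcases h₂ with ⟨h₂, h₂'⟩ | ⟨h₂, h₂'⟩
    · exact disjoint_left.1 hT h₁' h₂'
    · exact disjoint_left.1 hST h₂' h₁'
    · exact disjoint_left.1 hST h₂ h₁
    · exact disjoint_left.1 hT h₁ h₂

lemma card_cut_union_left {S₁ S₂ T : Finset G.V} (hS : Disjoint S₁ S₂) (hST : Disjoint T S₁) :
    #(G.cut (S₁ ∪ S₂) T) = #(G.cut S₁ T) + #(G.cut S₂ T) := by
  rw [cut_comm, card_cut_union_right hS hST, cut_comm S₁, cut_comm S₂]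

lemma card_term_eq (Z T : Finset G.V) :
    #(G.Term Z) = #(G.cut (Z ∩ T) (Zᶜ ∩ T)) + #(G.cut (Z ∩ T) (Zᶜ ∩ Tᶜ))
      + #(G.cut (Z ∩ Tᶜ) (Zᶜ ∩ T)) + #(G.cut (Z ∩ Tᶜ) (Zᶜ ∩ Tᶜ)) := by
  have hsplit : ∀ S : Finset G.V, S = S ∩ T ∪ S ∩ Tᶜ := fun S => by
    ext x; simp only [mem_union, mem_inter, mem_compl]; tauto
  have hcut : G.cut Z Zᶜ = G.cut (Z ∩ T ∪ Z ∩ Tᶜ) (Zᶜ ∩ T ∪ Zᶜ ∩ Tᶜ) := by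
    rw [← hsplit, ← hsplit]
  rw [term_eq_cut, hcut, card_cut_union_left, card_cut_union_right, card_cut_union_right]
  · ring
  all_goals rw [disjoint_left]; simp only [mem_union, mem_inter, mem_compl]; tauto

lemma card_term_inter (Z T : Finset G.V) :
    #(G.Term (Z ∩ T)) = #(G.cut (Z ∩ T) (Zᶜ ∩ T)) + #(G.cut (Z ∩ T) (Z ∩ Tᶜ))
      + #(G.cut (Z ∩ T) (Zᶜ ∩ Tᶜ)) := by
  have hcut : G.cut (Z ∩ T) (Z ∩ T)ᶜ = G.cut (Z ∩ T) (Zᶜ ∩ T ∪ Z ∩ Tᶜ ∪ Zᶜ ∩ Tᶜ) := by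
    congr 1; ext x; simp only [mem_union, mem_inter, mem_compl]; tauto
  rw [term_eq_cut, hcut, card_cut_union_right, card_cut_union_right]
  all_goals rw [disjoint_left]; simp only [mem_union, mem_inter, mem_compl]; tauto

lemma cut_nonempty_of_connSub {S T : Finset G.V} (hS : G.ConnSub S) (hin : (S ∩ T).Nonempty)
    (hout : (S ∩ Tᶜ).Nonempty) : (G.cut (S ∩ T) (S ∩ Tᶜ)).Nonempty := by
  obtain ⟨u, hu⟩ := hin
  obtain ⟨v, hv⟩ := hout
  rw [mem_inter] at hu hv
  by_contra hcut
  have hreach : ∀ w, Relation.ReflTransGen (fun a b => a ∈ S ∧ b ∈ S ∧ G.Adj a b) u w →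
      w ∈ T := by
    intro w hw
    induction hw with
    | refl => exact hu.2
    | tail _ hbc ih =>
      obtain ⟨hb, hc, e, he⟩ := hbc
      by_contra hcT
      refine hcut ⟨e, ?_⟩
      rcases he with he | he <;> simp [he, hb, hc, ih, hcT]
  exact (mem_compl.1 hv.2) (hreach v (hS.2 u hu.1 v hv.1))

lemma connSub_inter_of_cut_onComp {S T : Finset G.V} (hS : G.ConnSub S) {x : G.V}
    (hx : x ∈ S ∩ T) (hcut : ∀ e ∈ G.cut (S ∩ T) (S ∩ Tᶜ), G.onComp e x) :
    G.ConnSub (S ∩ T) := by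
  have hexit : ∀ a b, a ∈ S ∩ T → b ∈ S → b ∉ S ∩ T → G.Adj a b → a = x := by
    rintro a b ha hb hbA ⟨e, he⟩
    have hbT : b ∈ Tᶜ := by simpa [hb] using hbA
    have hx' := hcut e (by rcases he with he | he <;> simp [he, ha, hb, hbT])
    rcases he with he | he <;> rcases hx' with hx' | hx' <;> simp only [he] at hx' <;>
      first | exact hx' | exact absurd (hx' ▸ hx) hbA
  refine ⟨⟨x, hx⟩, fun u hu v hv => ?_⟩
  -- a walk in `S` can leave and re-enter `S ∩ T` only through `x`
  have hwalk : ∀ w, Relation.ReflTransGen (fun a b => a ∈ S ∧ b ∈ S ∧ G.Adj a b) u w →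
      (w ∈ S ∩ T → Relation.ReflTransGen (fun a b => a ∈ S ∩ T ∧ b ∈ S ∩ T ∧ G.Adj a b) u w) ∧
      (w ∉ S ∩ T → Relation.ReflTransGen (fun a b => a ∈ S ∩ T ∧ b ∈ S ∩ T ∧ G.Adj a b) u x) := by
    intro w hw
    induction hw with
    | refl => exact ⟨fun _ => .refl, fun h => absurd hu h⟩
    | @tail b c _ hbc ih =>
      obtain ⟨hbS, hcS, hadj⟩ := hbc
      by_cases hb : b ∈ S ∩ T <;> by_cases hc : c ∈ S ∩ T
      · exact ⟨fun _ => (ih.1 hb).tail ⟨hb, hc, hadj⟩, fun h => absurd hc h⟩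
      · exact ⟨fun h => absurd h hc, fun _ => hexit b c hb hcS hc hadj ▸ ih.1 hb⟩
      · have hcx := hexit c b hc hbS hb (by obtain ⟨e, he⟩ := hadj; exact ⟨e, he.symm⟩)
        exact ⟨fun _ => hcx ▸ ih.2 hb, fun h => absurd hc h⟩
      · exact ⟨fun h => absurd h hc, fun _ => ih.2 hb⟩
  exact (hwalk v (hS.2 u (mem_inter.1 hu).1 v (mem_inter.1 hv).1)).1 hv

lemma connSub_inter_of_card_cut_le_one {S T : Finset G.V} (hS : G.ConnSub S)
    (hne : (S ∩ T).Nonempty) (hcut : #(G.cut (S ∩ T) (S ∩ Tᶜ)) ≤ 1) : G.ConnSub (S ∩ T) := by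
  rcases (G.cut (S ∩ T) (S ∩ Tᶜ)).eq_empty_or_nonempty with hempty | ⟨e, he⟩
  · obtain ⟨x, hx⟩ := hne
    exact connSub_inter_of_cut_onComp hS hx (by simp [hempty])
  · have hunique : ∀ e' ∈ G.cut (S ∩ T) (S ∩ Tᶜ), e' = e :=
      fun e' he' => card_le_one.1 hcut e' he' e he
    rcases mem_cut.1 he with ⟨h₁, -⟩ | ⟨-, h₂⟩
    · exact connSub_inter_of_cut_onComp hS h₁ fun e' he' => hunique e' he' ▸ Or.inl rfl
    · exact connSub_inter_of_cut_onComp hS h₂ fun e' he' => hunique e' he' ▸ Or.inr rfl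

lemma connSub_union {S T : Finset G.V} (hS : G.ConnSub S) (hT : G.ConnSub T) {p : G.V}
    (hpS : p ∈ S) (hpT : p ∈ T) : G.ConnSub (S ∪ T) := by
  have lift : ∀ {R : Finset G.V}, R ⊆ S ∪ T → ∀ {u v}, Relation.ReflTransGen
      (fun a b => a ∈ R ∧ b ∈ R ∧ G.Adj a b) u v →
      Relation.ReflTransGen (fun a b => a ∈ S ∪ T ∧ b ∈ S ∪ T ∧ G.Adj a b) u v :=
    fun {R} hR {u v} => Relation.ReflTransGen.mono
      (fun a b (h : a ∈ R ∧ b ∈ R ∧ G.Adj a b) => ⟨hR h.1, hR h.2.1, h.2.2⟩) u v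
  have hSsub : S ⊆ S ∪ T := subset_union_left
  have hTsub : T ⊆ S ∪ T := subset_union_right
  refine ⟨⟨p, mem_union_left _ hpS⟩, fun u hu v hv => ?_⟩
  rcases mem_union.1 hu with hu | hu <;> rcases mem_union.1 hv with hv | hv
  · exact lift hSsub (hS.2 u hu v hv)
  · exact (lift hSsub (hS.2 u hu p hpS)).trans (lift hTsub (hT.2 p hpT v hv))
  · exact (lift hTsub (hT.2 u hu p hpT)).trans (lift hSsub (hS.2 p hpS v hv))
  · exact lift hTsub (hT.2 u hu v hv)

-- Each of `Z, Z', Zᶜ, Z'ᶜ` is connected and split by the other tail, so the four cuts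
-- `A–P, A–Q, P–B, Q–B` are nonempty; `Term Z` and `Term Z'` each contain two of them.
lemma card_cut_inter_of_isKTail_two {Z Z' : Finset G.V} (hZ : G.IsKTail Z 2)
    (hZ' : G.IsKTail Z' 2) (hA : (Z ∩ Z').Nonempty) (hP : (Zᶜ ∩ Z').Nonempty)
    (hQ : (Z ∩ Z'ᶜ).Nonempty) (hB : (Zᶜ ∩ Z'ᶜ).Nonempty) :
    #(G.cut (Z ∩ Z') (Zᶜ ∩ Z')) = 1 ∧ #(G.cut (Z ∩ Z') (Z ∩ Z'ᶜ)) = 1 ∧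
      #(G.cut (Z ∩ Z') (Zᶜ ∩ Z'ᶜ)) = 0 := by
  obtain ⟨⟨-, hZc, hZcc⟩, hZk⟩ := hZ
  obtain ⟨⟨-, hZ'c, hZ'cc⟩, hZ'k⟩ := hZ'
  have hAP := cut_nonempty_of_connSub hZ'c (T := Z) (by rwa [inter_comm]) (by rwa [inter_comm])
  have hAQ := cut_nonempty_of_connSub hZc hA hQ
  have hPB := cut_nonempty_of_connSub hZcc hP hB
  have hQB := cut_nonempty_of_connSub hZ'cc (T := Z) (by rwa [inter_comm]) (by rwa [inter_comm])
  have hkZ := card_term_eq Z Z'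
  have hkZ' := card_term_eq Z' Z
  simp only [inter_comm Z' Z, inter_comm Z'ᶜ Z, inter_comm Z' Zᶜ, inter_comm Z'ᶜ Zᶜ] at hAP hQB hkZ'
  rw [cut_comm (Zᶜ ∩ Z') (Z ∩ Z'ᶜ)] at hkZ'
  have := card_pos.2 hAP; have := card_pos.2 hAQ; have := card_pos.2 hPB; have := card_pos.2 hQB
  unfold k at hZk hZ'k
  omega

end NodalGraph

open NodalGraph in
theorem wedge_of_two_tails_is_two_tail_general
    (G : NodalGraph) (Z Z' : Finset G.V) (γ : G.V)
    (hZ : G.IsKTail Z 2) (hZ' : G.IsKTail Z' 2)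
    (hγ : γ ∈ Z ∩ Z')
    (hb : G.base ∈ Zᶜ ∩ Z'ᶜ) :
    G.IsKTail (Z ∩ Z') 2 := by
  by_cases hZZ' : Z ⊆ Z'
  · rwa [inter_eq_left.2 hZZ']
  by_cases hZ'Z : Z' ⊆ Z
  · rwa [inter_eq_right.2 hZ'Z]
  have hP : (Zᶜ ∩ Z').Nonempty := by
    rw [inter_comm, ← sdiff_eq_inter_compl]; exact sdiff_nonempty.2 hZ'Z
  have hQ : (Z ∩ Z'ᶜ).Nonempty := by rw [← sdiff_eq_inter_compl]; exact sdiff_nonempty.2 hZZ'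
  obtain ⟨hAP, hAQ, hAB⟩ := card_cut_inter_of_isKTail_two hZ hZ' ⟨γ, hγ⟩ hP hQ ⟨_, hb⟩
  obtain ⟨hbZ, hbZ'⟩ := mem_inter.1 hb
  refine ⟨⟨fun h => mem_compl.1 hbZ (mem_inter.1 (h ▸ mem_univ G.base)).1, ?_, ?_⟩, ?_⟩
  · rw [inter_comm]
    refine connSub_inter_of_card_cut_le_one hZ'.1.2.1 ⟨γ, by rwa [inter_comm]⟩ ?_
    rw [inter_comm, inter_comm Z', hAP]
  · rw [compl_inter]
    exact connSub_union hZ.1.2.2 hZ'.1.2.2 hbZ hbZ'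
  · rw [k, card_term_inter, hAP, hAQ, hAB]

/-- Lemma 2.2: if `Z, Z'` are 2-tails with `C_γ ∪ C_{γ'} ⊆ Z ∧ Z'`
and `σ(0) ∈ Zᶜ ∧ (Z')ᶜ`, then `Z ∧ Z'` is a 2-tail. -/
theorem wedge_of_two_tails_is_two_tail
    (G : NodalGraph) (hconn : G.Connected) (Z Z' : Finset G.V) (γ γ' : G.V)
    (hZ : G.IsKTail Z 2) (hZ' : G.IsKTail Z' 2)
    (hγ : γ ∈ Z ∩ Z') (hγ' : γ' ∈ Z ∩ Z')
    (hb : G.base ∈ Zᶜ ∩ Z'ᶜ) :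
    G.IsKTail (Z ∩ Z') 2 :=
  wedge_of_two_tails_is_two_tail_general G Z Z' γ hZ hZ' hγ hb
end

section
/- Let C be a nodal curve and Z a tail of C. If Term_Z ⊂ Z' for some tail Z' of C, then either Z ⊆ Z' or Z^c ⊆ Z'. -/
open Finset

/-! If `Z` met both `Z'ᶜ` and `Zᶜ ∩ Z'ᶜ`, a path between them inside the connected `Z'ᶜ` would
have to leave `Z` through a node both of whose branches lie off `Z'`, i.e. a terminal point of `Z`
not on `Z'`. -/

namespace NodalGraph

variable {G : NodalGraph}

theorem exists_mem_term_of_adj {Z : Finset G.V} {p q : G.V} (hpq : G.Adj p q) (hp : p ∈ Z)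
    (hq : q ∉ Z) : ∃ e ∈ G.Term Z, G.crosses {p, q} e := by
  obtain ⟨e, he⟩ := hpq
  refine ⟨e, ?_, ?_⟩
  · rcases he with he | he <;> simp [Term, he, hp, hq]
  · rcases he with he | he <;> simp [crosses, he]

theorem exists_mem_term_crosses_of_reflTransGen {S Z : Finset G.V} {a b : G.V}
    (hab : Relation.ReflTransGen (fun p q => p ∈ S ∧ q ∈ S ∧ G.Adj p q) a b)
    (ha : a ∈ Z) (hb : b ∉ Z) : ∃ e ∈ G.Term Z, G.crosses S e := by
  induction hab with
  | refl => exact absurd ha hb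
  | @tail c d _ hcd ih =>
    by_cases hc : c ∈ Z
    · obtain ⟨hcS, hdS, hadj⟩ := hcd
      obtain ⟨e, heZ, he⟩ := exists_mem_term_of_adj hadj hc hb
      refine ⟨e, heZ, ?_⟩
      have hsub : ({c, d} : Finset G.V) ⊆ S := by simp [Finset.insert_subset_iff, hcS, hdS]
      exact ⟨hsub he.1, hsub he.2⟩
    · exact ih hc

theorem not_nodeOn_iff_crosses_compl {e : G.N} {Z : Finset G.V} :
    ¬ G.nodeOn e Z ↔ G.crosses Zᶜ e := by
  simp [nodeOn, crosses]

end NodalGraph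

theorem tail_term_subset_imp_general
    (G : NodalGraph) (Z Z' : Finset G.V)
    (hZ' : G.IsTail Z')
    (h : ∀ e ∈ G.Term Z, G.nodeOn e Z') :
    Z ⊆ Z' ∨ Zᶜ ⊆ Z' := by
  by_contra! hcon
  obtain ⟨a, haZ, haZ'⟩ := Finset.not_subset.mp hcon.1
  obtain ⟨b, hbZc, hbZ'⟩ := Finset.not_subset.mp hcon.2
  have hab := hZ'.2.2.2 a (Finset.mem_compl.mpr haZ') b (Finset.mem_compl.mpr hbZ')
  obtain ⟨e, heZ, he⟩ :=
    NodalGraph.exists_mem_term_crosses_of_reflTransGen hab haZ (Finset.mem_compl.mp hbZc)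
  exact NodalGraph.not_nodeOn_iff_crosses_compl.mpr he (h e heZ)

/-- Lemma 2.7(i): if every terminal point of a tail `Z` lies
on a tail `Z'`, then `Z ⊆ Z'` or `Zᶜ ⊆ Z'`. -/
theorem tail_term_subset_imp
    (G : NodalGraph) (hconn : G.Connected) (Z Z' : Finset G.V)
    (hZ : G.IsTail Z) (hZ' : G.IsTail Z')
    (h : ∀ e ∈ G.Term Z, G.nodeOn e Z') :
    Z ⊆ Z' ∨ Zᶜ ⊆ Z' :=
  tail_term_subset_imp_general G Z Z' hZ' h
end

section
/- Let C be a nodal curve, Z a tail with k_Z ≥ 2, and Z' a 1-tail of C. Then the pair (Z, Z') is free, i.e., Term_Z ∩ Term_{Z'} = ∅. -/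
open Finset

/-!
Let `e` be the unique terminal node of the 1-tail `Z'`, and suppose `e ∈ Term Z`. Then `e` has one
branch in `Z` and one in `Zᶜ`, so neither of the connected subcurves `Z`, `Zᶜ` contains both
branches of `e`. A path inside a subcurve from `Z'` to `Z'ᶜ` crosses a terminal node of `Z'`,
which can only be `e`; hence `Z` and `Zᶜ` each lie entirely on one side of `Z'`. So `Z'` is one of
`∅, univ, Z, Zᶜ`, and `Term Z'` is `∅` or `Term Z`, contradicting `k_{Z'} = 1 < k_Z`.
-/

lemma Finset.eq_empty_or_eq_univ_or_eq_or_eq_compl {α : Type*} [Fintype α] [DecidableEq α]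
    {Z Z' : Finset α} (hZ : Z ⊆ Z' ∨ Z ⊆ Z'ᶜ) (hZc : Zᶜ ⊆ Z' ∨ Zᶜ ⊆ Z'ᶜ) :
    Z' = ∅ ∨ Z' = univ ∨ Z' = Z ∨ Z' = Zᶜ := by
  rcases hZ with hZ | hZ <;> rcases hZc with hZc | hZc
  · exact .inr <| .inl <| eq_univ_of_forall fun x =>
      (em (x ∈ Z)).elim (fun hx => hZ hx) (fun hx => hZc (mem_compl.2 hx))
  · exact .inr <| .inr <| .inl <| .symm <| Subset.antisymm hZ fun x hx =>
      not_not.1 fun hxZ => mem_compl.1 (hZc (mem_compl.2 hxZ)) hx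
  · exact .inr <| .inr <| .inr <| .symm <| Subset.antisymm hZc fun x hx =>
      mem_compl.2 fun hxZ => mem_compl.1 (hZ hxZ) hx
  · exact .inl <| eq_empty_of_forall_notMem fun x hx =>
      (em (x ∈ Z)).elim (fun hxZ => mem_compl.1 (hZ hxZ) hx)
        (fun hxZ => mem_compl.1 (hZc (mem_compl.2 hxZ)) hx)

namespace NodalGraph

variable (G : NodalGraph)

@[simp]
lemma term_compl (Z : Finset G.V) : G.Term Zᶜ = G.Term Z := by
  ext e
  simp only [Term, mem_filter, mem_univ, true_and, mem_compl]
  tauto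

@[simp]
lemma term_empty : G.Term ∅ = ∅ := by
  simp [Term]

@[simp]
lemma term_univ : G.Term univ = ∅ := by
  rw [← compl_empty, term_compl, term_empty]

variable {G}

lemma not_crosses_of_mem_term {Z : Finset G.V} {e : G.N} (he : e ∈ G.Term Z) :
    ¬ G.crosses Z e ∧ ¬ G.crosses Zᶜ e := by
  simp only [Term, mem_filter, mem_univ, true_and] at he
  simp only [crosses, mem_compl]
  tauto

lemma exists_mem_term_crosses {S Z' : Finset G.V} {u v : G.V}
    (huv : Relation.ReflTransGen (fun a b => a ∈ S ∧ b ∈ S ∧ G.Adj a b) u v)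
    (hu : u ∈ Z') (hv : v ∉ Z') : ∃ e ∈ G.Term Z', G.crosses S e := by
  induction huv with
  | refl => exact absurd hu hv
  | @tail b c _ hbc ih =>
    by_cases hb : b ∈ Z'
    · obtain ⟨hbS, hcS, e, he⟩ := hbc
      refine ⟨e, ?_, ?_⟩
      · simp only [Term, mem_filter, mem_univ, true_and]
        rcases he with he | he <;> simp only [he] <;> tauto
      · rcases he with he | he <;> simp only [crosses, he] <;> tauto
    · exact ih hb

lemma ConnSub.subset_or_subset_compl {S Z' : Finset G.V} (hS : G.ConnSub S)
    (hcross : ∀ e ∈ G.Term Z', ¬ G.crosses S e) : S ⊆ Z' ∨ S ⊆ Z'ᶜ := by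
  by_contra! h
  obtain ⟨⟨u, huS, huZ'⟩, ⟨v, hvS, hvZ'⟩⟩ := h.imp not_subset.1 not_subset.1
  rw [mem_compl, not_not] at hvZ'
  obtain ⟨e, he, hSe⟩ := exists_mem_term_crosses (hS.2 v hvS u huS) hvZ' huZ'
  exact hcross e he hSe

end NodalGraph

theorem free_of_one_tail_general
    (G : NodalGraph) (Z Z' : Finset G.V)
    (hZ : G.IsTail Z) (hk : 2 ≤ G.k Z) (hZ' : G.IsKTail Z' 1) :
    G.free Z Z' := by
  obtain ⟨e, hTZ'⟩ := card_eq_one.mp hZ'.2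
  rw [NodalGraph.free, eq_empty_iff_forall_notMem]
  intro f hf
  rw [mem_inter, hTZ', mem_singleton] at hf
  obtain ⟨heZ, rfl⟩ := hf
  have hcrossZ : ∀ e ∈ G.Term Z', ¬ G.crosses Z e := by
    simpa [hTZ'] using (NodalGraph.not_crosses_of_mem_term heZ).1
  have hcrossZc : ∀ e ∈ G.Term Z', ¬ G.crosses Zᶜ e := by
    simpa [hTZ'] using (NodalGraph.not_crosses_of_mem_term heZ).2
  have hTerm : G.Term Z' = ∅ ∨ G.Term Z' = G.Term Z := by
    rcases eq_empty_or_eq_univ_or_eq_or_eq_compl (hZ.2.1.subset_or_subset_compl hcrossZ)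
        (hZ.2.2.subset_or_subset_compl hcrossZc) with h | h | h | h <;> simp [h]
  rcases hTerm with h | h
  · simp [hTZ'] at h
  · have : G.k Z = 1 := by rw [NodalGraph.k, ← h]; exact hZ'.2
    omega

/-- Lemma 2.7(iii): a tail `Z` with `k_Z ≥ 2` is free with
respect to every 1-tail `Z'`. -/
theorem free_of_one_tail
    (G : NodalGraph) (hconn : G.Connected) (Z Z' : Finset G.V)
    (hZ : G.IsTail Z) (hk : 2 ≤ G.k Z) (hZ' : G.IsKTail Z' 1) :
    G.free Z Z' :=
  free_of_one_tail_general G Z Z' hZ hk hZ'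
end
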